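/- arXiv:0708.1021 — 2 statements merged into one kernel-verified Lean document; each statement's English description precedes it below -/
import Mathlib

section
/- A CWS code in standard form with graph stabilizer S and word operators {Z^c : c ∈ C} detects a set of Pauli errors 𝓔 if and only if the classical code C detects the induced classical errors Cl_S(𝓔) = {Cl_S(E) : E ∈ 𝓔} (meaning c_i ⊕ Cl_S(E) ≠ c_j for all i ≠ j and all E ∈ 𝓔), and additionally, for each E ∈ 𝓔, either Cl_S(E) ≠ 0 or Z^{c_i} commutes with E for all i. -/
open Finset

def dotp {n : ℕ} (a b : Fin n → ZMod 2) : ZMod 2 := ∑ i, a i * b i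

def eV {n : ℕ} (i : Fin n) : Fin n → ZMod 2 := Pi.single i 1

/-- Pauli operators modulo phase: `(v, u)` represents `Z^v X^u`. -/
abbrev PV (n : ℕ) := (Fin n → ZMod 2) × (Fin n → ZMod 2)

def clMap {n : ℕ} (r : Fin n → Fin n → ZMod 2) (p : PV n) : Fin n → ZMod 2 :=
  p.1 + ∑ l, p.2 l • r l

/-- Stabilizer (mod phase) of the graph state: span of `(r_l, e_l)`. -/
def graphStab {n : ℕ} (r : Fin n → Fin n → ZMod 2) : Submodule (ZMod 2) (PV n) :=
  Submodule.span (ZMod 2) (Set.range fun l => ((r l, eV l) : PV n))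

section

variable {n : ℕ} (r : Fin n → Fin n → ZMod 2) (C : Set (Fin n → ZMod 2))
  (sgn : PV n → ZMod 2) (εf : PV n → ZMod 2)

/-- The Knill–Laflamme detection conditions for the CWS code in standard form,
at the Pauli-group level.  An error `E` is the signed Pauli `(-1)^{εf E} Z^{E.1} X^{E.2}`,
and `sgn s` is the sign carried by the stabilizer element of `S` whose
symplectic part is `s` (so `w† E w ∈ S` iff the symplectic part lies in
`graphStab r` and the accumulated sign matches `sgn`; conjugating
`E` by `Z^c` produces the sign `(-1)^{c·u}`).  The conditions are:
(i) `w_i† E w_j ∉ ±S` for all `i ≠ j`, and (ii) either `w_i† E w_i ∉ ±S` for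
all `i`, or `w_i† E w_i ∈ S` for all `i`, or `w_i† E w_i ∈ -S` for all `i`. -/
def DetectsQ (Err : Set (PV n)) : Prop :=
  ∀ E ∈ Err,
    (∀ ci ∈ C, ∀ cj ∈ C, ci ≠ cj → ((ci + E.1 + cj, E.2) : PV n) ∉ graphStab r)
    ∧ ((∀ c ∈ C, E ∉ graphStab r)
        ∨ (∀ c ∈ C, E ∈ graphStab r ∧ εf E + dotp c E.2 = sgn E)
        ∨ (∀ c ∈ C, E ∈ graphStab r ∧ εf E + dotp c E.2 = sgn E + 1))

lemma addself {n : ℕ} (x : Fin n → ZMod 2) : x + x = 0 := by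
  funext i; exact CharTwo.add_self_eq_zero _

lemma sum_smul_eV {n : ℕ} (a : Fin n → ZMod 2) : ∑ l, a l • eV l = a := by
  funext j
  simp only [Finset.sum_apply, Pi.smul_apply, eV, smul_eq_mul]
  rw [Finset.sum_eq_single j]
  · simp
  · intro b _ hb; simp [Pi.single_apply, hb]
  · simp

lemma mem_graphStab {n : ℕ} (r : Fin n → Fin n → ZMod 2) (p : PV n) :
    p ∈ graphStab r ↔ clMap r p = 0 := by
  rw [graphStab, Submodule.mem_span_range_iff_exists_fun (ZMod 2)]
  constructor
  · rintro ⟨a, ha⟩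
    have h2 : ∑ l, a l • eV l = p.2 := by
      have := congrArg Prod.snd ha
      simpa [Prod.snd_sum] using this
    have ha2 : a = p.2 := by rw [← sum_smul_eV a, h2]
    have h1 : ∑ l, a l • r l = p.1 := by
      have := congrArg Prod.fst ha
      simpa [Prod.fst_sum] using this
    subst ha2
    have : clMap r p = p.1 + p.1 := by rw [clMap, h1]
    rw [this]; exact addself p.1
  · intro h
    refine ⟨p.2, ?_⟩
    have h1 : ∑ l, p.2 l • r l = p.1 := by
      have h' : p.1 + (p.1 + ∑ l, p.2 l • r l) = p.1 + 0 := by rw [← clMap, h]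
      simpa [← add_assoc, addself] using h'
    apply Prod.ext
    · rw [Prod.fst_sum]; simpa using h1
    · rw [Prod.snd_sum]; simpa using sum_smul_eV p.2

lemma zmod2_cases : ∀ a b : ZMod 2, a = b ∨ a = b + 1 := by decide

/-- A CWS code in standard form with graph stabilizer `S`
(adjacency rows `r_l`) and word operators `{Z^c : c ∈ C}` detects a set of
Pauli errors `𝓔` iff the classical code `C` detects the induced classical
errors `Cl_S(𝓔)` (i.e. `c_i ⊕ Cl_S(E) ≠ c_j` for all `c_i ≠ c_j` in `C` and
all `E ∈ 𝓔`), and additionally for each `E ∈ 𝓔` either `Cl_S(E) ≠ 0` or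
`Z^{c}` commutes with `E` (i.e. `c · u = 0`) for all `c ∈ C`. -/
theorem stmt3 (hsym : ∀ i j, r i j = r j i) (hdiag : ∀ i, r i i = 0)
    (h0 : 0 ∈ C) (hsgn0 : sgn 0 = 0)
    (Err : Set (PV n)) :
    DetectsQ r C sgn εf Err ↔
      ∀ E ∈ Err,
        (∀ ci ∈ C, ∀ cj ∈ C, ci ≠ cj → ci + clMap r E ≠ cj)
        ∧ (clMap r E ≠ 0 ∨ ∀ c ∈ C, dotp c E.2 = 0) := by

  have key : ∀ (ci cj : Fin n → ZMod 2) (E : PV n),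
      (((ci + E.1 + cj, E.2) : PV n) ∈ graphStab r ↔ ci + clMap r E = cj) := by
    intro ci cj E
    rw [mem_graphStab]
    constructor
    · intro h
      have : ci + clMap r E + cj = 0 := by
        have := h
        simp only [clMap] at this ⊢
        rw [show ci + (E.1 + ∑ l, E.2 l • r l) + cj
              = ci + E.1 + cj + ∑ l, E.2 l • r l by abel]
        exact this
      have h2 := congrArg (fun x => x + cj) this
      simpa [add_assoc, addself] using h2
    · intro h
      simp only [clMap] at h ⊢
      rw [show ci + E.1 + cj + ∑ l, E.2 l • r l
            = ci + (E.1 + ∑ l, E.2 l • r l) + cj by abel, h]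
      exact addself cj
  constructor
  · intro hD E hE
    obtain ⟨h1, h2⟩ := hD E hE
    constructor
    · intro ci hci cj hcj hne heq
      exact h1 ci hci cj hcj hne ((key ci cj E).mpr heq)
    · rcases h2 with h | h | h
      · left; intro h0'
        exact h 0 h0 ((mem_graphStab r E).mpr h0')
      · right; intro c hc
        have hc0 := (h 0 h0).2
        have hcc := (h c hc).2
        simp only [dotp] at hc0 hcc ⊢
        have : εf E + ∑ i, c i * E.2 i = εf E + ∑ i, (0:ZMod 2) * E.2 i := by
          rw [hcc]; rw [← hc0]; simp
        have := add_left_cancel this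
        simpa using this
      · right; intro c hc
        have hc0 := (h 0 h0).2
        have hcc := (h c hc).2
        simp only [dotp] at hc0 hcc ⊢
        have : εf E + ∑ i, c i * E.2 i = εf E + ∑ i, (0:ZMod 2) * E.2 i := by
          rw [hcc]; rw [← hc0]; simp
        have := add_left_cancel this
        simpa using this
  · intro hD E hE
    obtain ⟨h1, h2⟩ := hD E hE
    constructor
    · intro ci hci cj hcj hne hmem
      exact h1 ci hci cj hcj hne ((key ci cj E).mp hmem)
    · by_cases hcl : clMap r E = 0
      · have hd : ∀ c ∈ C, dotp c E.2 = 0 := by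
          rcases h2 with h | h
          · exact absurd hcl h
          · exact h
        rcases zmod2_cases (εf E) (sgn E) with he | he
        · right; left; intro c hc
          exact ⟨(mem_graphStab r E).mpr hcl, by rw [hd c hc, add_zero, he]⟩
        · right; right; intro c hc
          exact ⟨(mem_graphStab r E).mpr hcl, by rw [hd c hc, add_zero, he]⟩
      · left; intro c hc hmem
        exact hcl ((mem_graphStab r E).mp hmem)


end
end

section
/- The 18-element classical code given by the codewords {0000000000, 1101001100, 0011001010, 0000011111, 0010001001, 1111100000, 1000111110, 1100100101, 0101101101, 0001000110, 1010010010, 0100110100, 1001010111, 1011010001, 0110111000, 0101110010, 1110100011, 0111111011} ⊆ F_2^{10} detects all sums of at most two induced classical errors of the 10-ring, establishing that the corresponding CWS code is a ((10,18,3)) quantum code. -/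
open Finset

/-- The 30 induced classical errors of the 10-ring. -/
def ringErr10 : Set (Fin 10 → ZMod 2) :=
  {d | ∃ i : Fin 10, d = eV i ∨ d = eV (i - 1) + eV (i + 1)
        ∨ d = eV (i - 1) + eV i + eV (i + 1)}

/-- The 18-element classical code of the new ((10,18,3)) CWS ring code. -/
def code10183 : Set (Fin 10 → ZMod 2) :=
  { ![0,0,0,0,0,0,0,0,0,0], ![1,1,0,1,0,0,1,1,0,0], ![0,0,1,1,0,0,1,0,1,0],
    ![0,0,0,0,0,1,1,1,1,1], ![0,0,1,0,0,0,1,0,0,1], ![1,1,1,1,1,0,0,0,0,0],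
    ![1,0,0,0,1,1,1,1,1,0], ![1,1,0,0,1,0,0,1,0,1], ![0,1,0,1,1,0,1,1,0,1],
    ![0,0,0,1,0,0,0,1,1,0], ![1,0,1,0,0,1,0,0,1,0], ![0,1,0,0,1,1,0,1,0,0],
    ![1,0,0,1,0,1,0,1,1,1], ![1,0,1,1,0,1,0,0,0,1], ![0,1,1,0,1,1,1,0,0,0],
    ![0,1,0,1,1,1,0,0,1,0], ![1,1,1,0,1,0,0,0,1,1], ![0,1,1,1,1,1,1,0,1,1] }

/-! ### Auxiliary machinery: encoding vectors in `Fin 10 → ZMod 2` as natural-number bitmasks -/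

/-- Decode a natural number bitmask into a vector over `ZMod 2`. -/
def dec (m : ℕ) : Fin 10 → ZMod 2 := fun i => if m.testBit (i : ℕ) then 1 else 0

lemma dec_add (a b : ℕ) : dec a + dec b = dec (a ^^^ b) := by
  funext i
  simp only [dec, Pi.add_apply, Nat.testBit_xor]
  cases a.testBit (i:ℕ) <;> cases b.testBit (i:ℕ) <;> decide

lemma dec_inj {a b : ℕ} (ha : a < 1024) (hb : b < 1024) (h : dec a = dec b) : a = b := by
  apply Nat.eq_of_testBit_eq
  intro i
  by_cases hi : i < 10
  · have h2 := congrFun h ⟨i, hi⟩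
    simp only [dec] at h2
    cases h1 : a.testBit i <;> cases h3 : b.testBit i <;> simp only [h1, h3] at h2 ⊢ <;>
      simp at h2
  · have hp : (1024:ℕ) ≤ 2^i := by
      calc (1024:ℕ) = 2^10 := rfl
      _ ≤ 2^i := Nat.pow_le_pow_right (by norm_num) (by omega)
    rw [Nat.testBit_lt_two_pow (lt_of_lt_of_le ha hp), Nat.testBit_lt_two_pow (lt_of_lt_of_le hb hp)]

lemma dec_zero : dec 0 = 0 := by
  funext i; simp [dec]

def codeN : List ℕ := [0, 203, 332, 992, 580, 31, 497, 659, 730, 392, 293, 178, 937, 557, 118, 314, 791, 894]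

def errN : List ℕ := [1, 514, 515, 2, 5, 7, 4, 10, 14, 8, 20, 28, 16, 40, 56, 32, 80, 112, 64, 160, 224, 128, 320, 448, 256, 640, 896, 512, 257, 769]

/-- Bitmask of the set `{x ^^^ y | x, y ∈ {0} ∪ errN}`. -/
def M : ℕ := 2743145746645576394963896433463959618363116610527776198851577730986588758243733864667922548420584432826880818577319407240836878191598749318607114420283775654442848736298438049253647174693466466039103795766113467903740457844545300493016675122176976835473170265968101396738329056070652291370558921491087359

set_option maxHeartbeats 2000000 in
lemma lemA : ∀ x ∈ 0::errN, ∀ y ∈ 0::errN, M.testBit (x ^^^ y) = true := by decide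

set_option maxHeartbeats 2000000 in
lemma lemB : ∀ a ∈ codeN, ∀ b ∈ codeN, a ≠ b → M.testBit (a ^^^ b) = false := by decide

lemma codeN_lt : ∀ a ∈ codeN, a < 1024 := by decide
lemma errN0_lt : ∀ x ∈ 0::errN, x < 1024 := by decide
lemma errN_ne : ∀ x ∈ errN, x ≠ 0 := by decide

lemma xor_lt {a b : ℕ} (ha : a < 1024) (hb : b < 1024) : a ^^^ b < 1024 := by
  have h1 : a < 2^10 := ha
  have h2 : b < 2^10 := hb
  have := Nat.xor_lt_two_pow h1 h2
  simpa using this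

lemma xor_shift {a b x y : ℕ} (h : a ^^^ x ^^^ y = b) : a ^^^ b = x ^^^ y := by
  subst h; rw [Nat.xor_assoc, ← Nat.xor_assoc a a, Nat.xor_self, Nat.zero_xor]

lemma mem_code {c : Fin 10 → ZMod 2} (hc : c ∈ code10183) : ∃ a ∈ codeN, c = dec a := by
  simp only [code10183, Set.mem_insert_iff, Set.mem_singleton_iff] at hc
  rcases hc with rfl|rfl|rfl|rfl|rfl|rfl|rfl|rfl|rfl|rfl|rfl|rfl|rfl|rfl|rfl|rfl|rfl|rfl
  exacts [⟨0, by decide, by decide⟩, ⟨203, by decide, by decide⟩, ⟨332, by decide, by decide⟩, ⟨992, by decide, by decide⟩, ⟨580, by decide, by decide⟩, ⟨31, by decide, by decide⟩, ⟨497, by decide, by decide⟩, ⟨659, by decide, by decide⟩, ⟨730, by decide, by decide⟩, ⟨392, by decide, by decide⟩, ⟨293, by decide, by decide⟩, ⟨178, by decide, by decide⟩, ⟨937, by decide, by decide⟩, ⟨557, by decide, by decide⟩, ⟨118, by decide, by decide⟩, ⟨314, by decide, by decide⟩, ⟨791, by decide, by decide⟩, ⟨894, by decide, by decide⟩]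

lemma mem_err {d : Fin 10 → ZMod 2} (hd : d ∈ ringErr10) : ∃ x ∈ errN, d = dec x := by
  obtain ⟨i, h⟩ := hd
  fin_cases i <;> rcases h with rfl|rfl|rfl
  exacts [⟨1, by decide, by decide⟩, ⟨514, by decide, by decide⟩, ⟨515, by decide, by decide⟩, ⟨2, by decide, by decide⟩, ⟨5, by decide, by decide⟩, ⟨7, by decide, by decide⟩, ⟨4, by decide, by decide⟩, ⟨10, by decide, by decide⟩, ⟨14, by decide, by decide⟩, ⟨8, by decide, by decide⟩, ⟨20, by decide, by decide⟩, ⟨28, by decide, by decide⟩, ⟨16, by decide, by decide⟩, ⟨40, by decide, by decide⟩, ⟨56, by decide, by decide⟩, ⟨32, by decide, by decide⟩, ⟨80, by decide, by decide⟩, ⟨112, by decide, by decide⟩, ⟨64, by decide, by decide⟩, ⟨160, by decide, by decide⟩, ⟨224, by decide, by decide⟩, ⟨128, by decide, by decide⟩, ⟨320, by decide, by decide⟩, ⟨448, by decide, by decide⟩, ⟨256, by decide, by decide⟩, ⟨640, by decide, by decide⟩, ⟨896, by decide, by decide⟩, ⟨512, by decide, by decide⟩, ⟨257, by decide, by decide⟩,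 ⟨769, by decide, by decide⟩]

lemma mem_err0 {d : Fin 10 → ZMod 2} (hd : d ∈ ringErr10 ∪ {0}) : ∃ x ∈ 0::errN, d = dec x := by
  rcases hd with hd | hd
  · obtain ⟨x, hx, rfl⟩ := mem_err hd
    exact ⟨x, List.mem_cons_of_mem _ hx, rfl⟩
  · exact ⟨0, List.mem_cons_self, by simpa [dec_zero] using hd⟩

/-- The 18-element classical code detects all sums of at most two
induced classical errors of the 10-ring (and all such nonzero error sums are
distinguished), establishing that the corresponding CWS code is a ((10,18,3))
quantum code. -/
theorem stmt9 :
    (∀ c ∈ code10183, ∀ c' ∈ code10183, c ≠ c' →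
      ∀ d ∈ ringErr10 ∪ {0}, ∀ d' ∈ ringErr10 ∪ {0}, c + d + d' ≠ c')
    ∧ (∀ d ∈ ringErr10, d ≠ 0)
    ∧ (∀ d ∈ ringErr10, ∀ d' ∈ ringErr10, d ≠ d' → d + d' ≠ 0) := by
  refine ⟨?_, ?_, ?_⟩
  · intro c hc c' hc' hne d hd d' hd'
    obtain ⟨a, ha, rfl⟩ := mem_code hc
    obtain ⟨b, hb, rfl⟩ := mem_code hc'
    obtain ⟨x, hx, rfl⟩ := mem_err0 hd
    obtain ⟨y, hy, rfl⟩ := mem_err0 hd'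
    rw [dec_add, dec_add]
    intro h
    have hab : a ≠ b := fun e => hne (by rw [e])
    have hlt : a ^^^ x ^^^ y < 1024 :=
      xor_lt (xor_lt (codeN_lt a ha) (errN0_lt x hx)) (errN0_lt y hy)
    have h2 : a ^^^ x ^^^ y = b := dec_inj hlt (codeN_lt b hb) h
    have hB := lemB a ha b hb hab
    rw [xor_shift h2, lemA x hx y hy] at hB
    simp at hB
  · intro d hd h
    obtain ⟨x, hx, rfl⟩ := mem_err hd
    have : x = 0 := by
      apply dec_inj (errN0_lt x (List.mem_cons_of_mem _ hx)) (by norm_num)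
      rw [h, dec_zero]
    exact errN_ne x hx this
  · intro d hd d' hd' hne h
    obtain ⟨x, hx, rfl⟩ := mem_err hd
    obtain ⟨y, hy, rfl⟩ := mem_err hd'
    rw [dec_add] at h
    have hxy : x ^^^ y = 0 := by
      apply dec_inj (xor_lt (errN0_lt x (List.mem_cons_of_mem _ hx)) (errN0_lt y (List.mem_cons_of_mem _ hy))) (by norm_num)
      rw [h, dec_zero]
    exact hne (by rw [(by rw [← Nat.xor_zero x, ← Nat.xor_self y, ← Nat.xor_assoc, hxy, Nat.zero_xor] : x = y)])
end
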